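/- Under Conditions A and Conditions B̃1–B̃2, there exists an integer t' such that for every integer t ≥ t' there is a number N0 > 0 with the following property: for each coordinate i = 1,…,M, every x ∈ V and every y ∈ 𝒴 with L_{2,i}(y_i) ≥ N0, E_{x,y}[L_{2,i}(Y_i^t) − L_{2,i}(y_i)] ≤ −tΔ, where Δ = (min_{1≤i≤M} ε_i)/10. -/

import Mathlib

open MeasureTheory ProbabilityTheory Filter Set
open scoped ENNReal

noncomputable section

/-- First hitting time (at a time `≥ 1`) of a set along a trajectory, valued in `ℝ≥0∞`
(`∞` if the set is never hit). -/
def hitTime {S : Type*} (V : Set S) (ω : ℕ → S) : ℝ≥0∞ :=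
  sInf {r : ℝ≥0∞ | ∃ n : ℕ, r = n ∧ 1 ≤ n ∧ ω n ∈ V}

/-- A time-homogeneous Markov chain, given by the family of its path-space laws
`P z` (the law of the whole trajectory when started at `z`). -/
structure MarkovFamily (S : Type*) [MeasurableSpace S] where
  P : S → Measure (ℕ → S)
  prob : ∀ z, IsProbabilityMeasure (P z)
  meas : Measurable P
  start : ∀ z, P z {ω | ω 0 = z} = 1
  markov : ∀ (z : S) (n : ℕ) (B : Set (ℕ → S)),
      MeasurableSet[MeasurableSpace.comap (fun (ω : ℕ → S) (i : Fin (n+1)) => ω i) inferInstance] B →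
      ∀ A : Set (ℕ → S), MeasurableSet A →
        P z (B ∩ {ω | (fun k => ω (n + k)) ∈ A}) = ∫⁻ ω in B, P (ω n) A ∂ P z

/-- A set `D` is positive recurrent for the chain: the hitting time of `D` is a.s. finite
from every initial state, and its expectation is bounded uniformly over initial states in `D`. -/
def PosRec {S : Type*} [MeasurableSpace S] (F : MarkovFamily S) (D : Set S) : Prop :=
  (∀ z, F.P z {ω | hitTime D ω < ⊤} = 1) ∧
  ∃ C : ℝ≥0∞, C < ⊤ ∧ ∀ z ∈ D, ∫⁻ ω, hitTime D ω ∂ F.P z ≤ C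


variable {X Y : Type*} [MeasurableSpace X] [MeasurableSpace Y]

open Classical in
/-- The expected hitting time of `V` (at a time `≥ 1`), as the test function `L1`:
`L1 x = E_x τ_V` for `x ∉ V` and `L1 x = 0` for `x ∈ V`. -/
def L1fun (XC : MarkovFamily X) (V : Set X) (x : X) : ℝ≥0∞ :=
  if x ∈ V then 0 else ∫⁻ ω, hitTime V ω ∂ XC.P x

/-- Conditions A of the paper for the two-component chain `chain` on `X × Y` whose first
component is the autonomous Markov chain `XC`:  autonomy of the `X`-component (A0), positive
recurrence of the set `V` for the `X`-chain, existence of a stationary distribution `π` for the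
`X`-chain with convergence to it in total variation from every point, uniformly over `V`, and
sublinear growth of `E_x L1(X^t)` uniformly over `x ∈ V`. -/
def CondA (chain : MarkovFamily (X × Y)) (XC : MarkovFamily X) (V : Set X)
    (π : Measure X) : Prop :=
  MeasurableSet V ∧
  -- A0 : the X-component evolves autonomously, with path law `XC.P x` for any initial `y`
  (∀ x y, Measure.map (fun (ω : ℕ → X × Y) (n : ℕ) => (ω n).1) (chain.P (x, y)) = XC.P x) ∧
  -- the hitting time of V is a.s. finite from every initial state
  (∀ x, XC.P x {ω | hitTime V ω < ⊤} = 1) ∧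
  -- and its expectation is uniformly bounded on V
  (∃ s0 : ℝ≥0∞, s0 < ⊤ ∧ ∀ x ∈ V, ∫⁻ ω, hitTime V ω ∂ XC.P x ≤ s0) ∧
  -- π is a stationary distribution of the X-chain
  IsProbabilityMeasure π ∧
  (∀ B : Set X, MeasurableSet B → ∫⁻ x, XC.P x {ω | ω 1 ∈ B} ∂π = π B) ∧
  -- convergence to π in total variation from every initial state
  (∀ x, ∀ ε : ℝ, 0 < ε → ∃ T : ℕ, ∀ t ≥ T, ∀ B : Set X, MeasurableSet B →
      |(XC.P x {ω | ω t ∈ B}).toReal - (π B).toReal| ≤ ε) ∧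
  -- uniformly over x ∈ V
  (∀ ε : ℝ, 0 < ε → ∃ T : ℕ, ∀ t ≥ T, ∀ x ∈ V, ∀ B : Set X, MeasurableSet B →
      |(XC.P x {ω | ω t ∈ B}).toReal - (π B).toReal| ≤ ε) ∧
  -- (1/t) sup_{x ∈ V} E_x L1(X^t) → 0
  (∀ ε : ℝ, 0 < ε → ∃ T : ℕ, ∀ t ≥ T, ∀ x ∈ V,
      ∫⁻ ω, L1fun XC V (ω t) ∂ XC.P x ≤ ENNReal.ofReal (ε * t))

/-- Condition B1 of the paper: the absolute increments of `L2` along the `Y`-component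
have expectations bounded by `U`, uniformly in the initial state. -/
def CondB1 (chain : MarkovFamily (X × Y)) (L2 : Y → ℝ) (U : ℝ) : Prop :=
  Measurable L2 ∧ (∀ y, 0 ≤ L2 y) ∧
  ∀ (x : X) (y : Y),
    ∫⁻ ω, ENNReal.ofReal |L2 (ω 1).2 - L2 y| ∂ chain.P (x, y) ≤ ENNReal.ofReal U

/-- Condition B2 of the paper: a drift inequality
`E_{x,y}[L2(Y^1) - L2(y)] ≤ f x + h (L2 y)` with `h ↓ 0` and `∫ f dπ = -ε < 0`. -/
def CondB2 (chain : MarkovFamily (X × Y)) (π : Measure X) (L2 : Y → ℝ)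
    (h : ℝ → ℝ) (f : X → ℝ) (ε : ℝ) : Prop :=
  Antitone h ∧ (∀ r : ℝ, 0 ≤ h r) ∧ Tendsto h atTop (nhds 0) ∧
  Measurable f ∧ (∃ K : ℝ, ∀ x, |f x| ≤ K) ∧
  0 < ε ∧ (∫ x, f x ∂π = -ε) ∧
  ∀ (x : X) (y : Y),
    ∫ ω, (L2 (ω 1).2 - L2 y) ∂ chain.P (x, y) ≤ f x + h (L2 y)

end

variable {M : ℕ} {Yi : Fin M → Type*} [∀ i, MeasurableSpace (Yi i)]

/-- Condition B̃1 of the paper (multivariate case): for each coordinate `i`, the absolute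
increments of `L2 i` along the `i`-th coordinate of the `Y`-component have expectations
bounded by `U`, uniformly in the initial state. -/
def CondB1multi {X : Type*} [MeasurableSpace X]
    (chain : MarkovFamily (X × (∀ i, Yi i))) (L2 : ∀ i, Yi i → ℝ) (U : ℝ) : Prop :=
  (∀ i, Measurable (L2 i)) ∧ (∀ i y, 0 ≤ L2 i y) ∧
  ∀ (i : Fin M) (x : X) (y : ∀ i, Yi i),
    ∫⁻ ω, ENNReal.ofReal |L2 i ((ω 1).2 i) - L2 i (y i)| ∂ chain.P (x, y) ≤ ENNReal.ofReal U

/-- Condition B̃2 of the paper (multivariate case): for each coordinate `i`, a drift inequality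
`E_{x,y}[L2_i(Y_i^1) - L2_i(y_i)] ≤ f_i x + h_i (L2_i y_i)` with `h_i ↓ 0`, `f_i` bounded
measurable and `∫ f_i dπ = -ε_i < 0`; note that the right-hand side depends only on `x` and on
the `i`-th coordinate of `y`. -/
def CondB2multi {X : Type*} [MeasurableSpace X]
    (chain : MarkovFamily (X × (∀ i, Yi i))) (π : Measure X) (L2 : ∀ i, Yi i → ℝ)
    (h : Fin M → ℝ → ℝ) (f : Fin M → X → ℝ) (εs : Fin M → ℝ) : Prop :=
  ∀ i : Fin M,
    Antitone (h i) ∧ (∀ r : ℝ, 0 ≤ h i r) ∧ Tendsto (h i) atTop (nhds 0) ∧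
    Measurable (f i) ∧ (∃ K : ℝ, ∀ x, |f i x| ≤ K) ∧
    0 < εs i ∧ (∫ x, f i x ∂π = -εs i) ∧
    ∀ (x : X) (y : ∀ i, Yi i),
      ∫ ω, (L2 i ((ω 1).2 i) - L2 i (y i)) ∂ chain.P (x, y) ≤ f i x + h i (L2 i (y i))

/-- Condition B̃3 of the paper: for each coordinate `i`, the `t`-step drift of `L2 i` grows
sublinearly in `t`, uniformly over `x ∈ V` and all `y`. -/
def CondB3multi {X : Type*} [MeasurableSpace X]
    (chain : MarkovFamily (X × (∀ i, Yi i))) (V : Set X) (L2 : ∀ i, Yi i → ℝ) : Prop :=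
  ∀ i : Fin M, ∀ ε : ℝ, 0 < ε → ∃ N : ℕ, ∀ t ≥ N, ∀ x ∈ V, ∀ y : ∀ i, Yi i,
    ∫ ω, (L2 i ((ω t).2 i) - L2 i (y i)) ∂ chain.P (x, y) ≤ ε * t

/-!
For one coordinate, telescoping the one-step drift bound along the chain gives
`E[L(Y^t)] - L(y) ≤ ∑_{n<t} (E f(X^n) + E h(L(Y^n)))`. Since `X^n → π` in total variation
uniformly over starting points in `V`, `E f(X^n) ≤ -ε + η` once `n ≥ T`; the first `T` terms
cost a bounded amount, negligible for large `t`. Since the increments of `L` have expectation at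
most `U`, `E|L(Y^n) - L(y)| ≤ nU`, so by Markov's inequality `L(Y^n) ≥ N/2` with probability
close to one when `L(y) ≥ N` and `n ≤ t`, and then `E h(L(Y^n)) ≤ h(N/2) + h(0) · 2nU/N` is
small for `N` large. There are finitely many coordinates, so the thresholds can be taken uniform
in `i`.
-/

section TotalVariation

variable {α : Type*} [MeasurableSpace α] {μ ν : Measure α} {g : α → ℝ} {K δ : ℝ}

lemma integral_eq_setIntegral_Ioc_measureReal_lt [IsFiniteMeasure μ] (hg : Measurable g)
    (hg0 : ∀ a, 0 ≤ g a) (hgK : ∀ a, g a ≤ K) :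
    ∫ a, g a ∂μ = ∫ t in Ioc 0 K, μ.real {a | t < g a} := by
  have hint : Integrable g μ :=
    .of_bound hg.aestronglyMeasurable K (.of_forall fun a => by
      rw [Real.norm_eq_abs, abs_of_nonneg (hg0 a)]; exact hgK a)
  rw [hint.integral_eq_integral_meas_lt (.of_forall hg0)]
  refine setIntegral_eq_of_subset_of_forall_sdiff_eq_zero measurableSet_Ioi
    Ioc_subset_Ioi_self fun t ht => ?_
  have hKt : K < t := not_le.1 fun htK => ht.2 ⟨ht.1, htK⟩
  have : {a | t < g a} = ∅ := eq_empty_of_forall_notMem fun a ha => (hgK a).not_gt (hKt.trans ha)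
  simp [this]

lemma abs_integral_sub_integral_le_of_nonneg [IsFiniteMeasure μ] [IsFiniteMeasure ν]
    (hg : Measurable g) (hg0 : ∀ a, 0 ≤ g a) (hgK : ∀ a, g a ≤ K) (hK : 0 ≤ K)
    (hTV : ∀ B, MeasurableSet B → |μ.real B - ν.real B| ≤ δ) :
    |∫ a, g a ∂μ - ∫ a, g a ∂ν| ≤ K * δ := by
  have hint (ρ : Measure α) [IsFiniteMeasure ρ] :
      IntegrableOn (fun t => ρ.real {a | t < g a}) (Ioc 0 K) :=
    (Antitone.intervalIntegrable fun s t hst =>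
      measureReal_mono fun a (ha : t < g a) => hst.trans_lt ha).1
  rw [integral_eq_setIntegral_Ioc_measureReal_lt hg hg0 hgK,
    integral_eq_setIntegral_Ioc_measureReal_lt hg hg0 hgK, ← integral_sub (hint μ) (hint ν),
    ← Real.norm_eq_abs]
  calc ‖∫ t in Ioc 0 K, (μ.real {a | t < g a} - ν.real {a | t < g a})‖
      ≤ δ * volume.real (Ioc 0 K) :=
        norm_setIntegral_le_of_norm_le_const measure_Ioc_lt_top fun t _ =>
          hTV _ (hg measurableSet_Ioi)
    _ = K * δ := by simp [hK, mul_comm]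

lemma abs_integral_sub_integral_le [IsFiniteMeasure μ] [IsFiniteMeasure ν]
    (hg : Measurable g) (hgK : ∀ a, |g a| ≤ K) (hK : 0 ≤ K)
    (hTV : ∀ B, MeasurableSet B → |μ.real B - ν.real B| ≤ δ) :
    |∫ a, g a ∂μ - ∫ a, g a ∂ν| ≤ 2 * K * δ := by
  have hsplit (ρ : Measure α) [IsFiniteMeasure ρ] :
      ∫ a, g a ∂ρ = ∫ a, max (g a) 0 ∂ρ - ∫ a, max (-g a) 0 ∂ρ := by
    have hint : Integrable g ρ := .of_bound hg.aestronglyMeasurable K (.of_forall hgK)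
    rw [← integral_sub hint.pos_part hint.neg_part]
    simp_rw [max_zero_sub_max_neg_zero_eq_self]
  have hpos := abs_integral_sub_integral_le_of_nonneg (hg.max measurable_const)
    (fun a => le_max_right _ _) (fun a => max_le ((le_abs_self _).trans (hgK a)) hK) hK hTV
  have hneg := abs_integral_sub_integral_le_of_nonneg (g := fun a => max (-g a) 0)
    (hg.neg.max measurable_const)
    (fun a => le_max_right _ _) (fun a => max_le ((neg_le_abs _).trans (hgK a)) hK) hK hTV
  rw [hsplit μ, hsplit ν, sub_sub_sub_comm]
  linarith [abs_sub (∫ a, max (g a) 0 ∂μ - ∫ a, max (g a) 0 ∂ν)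
    (∫ a, max (-g a) 0 ∂μ - ∫ a, max (-g a) 0 ∂ν)]

end TotalVariation

lemma Antitone.le_add_mul_abs_sub {h : ℝ → ℝ} (hh : Antitone h) (hh0 : ∀ r, 0 ≤ h r)
    {r c N : ℝ} (hr : 0 ≤ r) (hN : 0 < N) (hNc : N ≤ c) :
    h r ≤ h (N / 2) + 2 * h 0 / N * |r - c| := by
  have hterm : 0 ≤ 2 * h 0 / N * |r - c| := by have := hh0 0; positivity
  rcases le_or_gt (N / 2) r with hr' | hr'
  · linarith [hh hr']
  · have h1 : N / 2 ≤ |r - c| := by rw [abs_sub_comm, abs_of_pos (by linarith)]; linarith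
    have h2 : h 0 ≤ 2 * h 0 / N * |r - c| := by
      rw [div_mul_eq_mul_div, le_div_iff₀ hN]; nlinarith [hh0 0]
    linarith [hh hr, hh0 (N / 2)]

lemma sum_range_le_of_piecewise_bound {a : ℕ → ℝ} {b c : ℝ} {T t : ℕ} (hTt : T ≤ t)
    (hbefore : ∀ n < T, a n ≤ c) (hafter : ∀ n, T ≤ n → n < t → a n ≤ b) :
    ∑ n ∈ Finset.range t, a n ≤ T * c + (t - T) * b := by
  rw [← Finset.sum_range_add_sum_Ico _ hTt]
  have h1 := Finset.sum_le_card_nsmul _ _ _ fun n hn => hbefore n (Finset.mem_range.1 hn)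
  have h2 := Finset.sum_le_card_nsmul (Finset.Ico T t) a b fun n hn =>
    hafter n (Finset.mem_Ico.1 hn).1 (Finset.mem_Ico.1 hn).2
  simp only [Finset.card_range, Nat.card_Ico, nsmul_eq_mul, Nat.cast_sub hTt] at h1 h2
  linarith

namespace MarkovFamily

variable {S : Type*} [MeasurableSpace S] (F : MarkovFamily S)

instance isProbabilityMeasure (z : S) : IsProbabilityMeasure (F.P z) := F.prob z

def ker : Kernel S (ℕ → S) := ⟨F.P, F.meas⟩

instance : IsMarkovKernel F.ker := ⟨F.prob⟩

lemma measurable_shift (n : ℕ) : Measurable fun (ω : ℕ → S) k => ω (n + k) :=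
  measurable_pi_lambda _ fun k => measurable_pi_apply (n + k)

lemma stronglyMeasurable_integral {G : (ℕ → S) → ℝ} (hG : Measurable G) :
    StronglyMeasurable fun z => ∫ ω, G ω ∂F.P z :=
  (hG.comp measurable_snd).stronglyMeasurable.integral_kernel_prod_right' (κ := F.ker)

lemma map_shift (z : S) (n : ℕ) :
    (F.P z).map (fun ω k => ω (n + k)) = ((F.P z).map (· n) ⊗ₘ F.ker).map Prod.snd := by
  ext A hA
  rw [Measure.map_apply (measurable_shift n) hA, Measure.map_apply measurable_snd hA,
    Measure.compProd_apply (measurable_snd hA)]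
  change _ = ∫⁻ a, F.ker a A ∂(F.P z).map (· n)
  rw [lintegral_map (F.ker.measurable_coe hA) (measurable_pi_apply n)]
  have h := F.markov z n univ .univ A hA
  rwa [univ_inter, Measure.restrict_univ] at h

lemma lintegral_comp_shift (z : S) (n : ℕ) {G : (ℕ → S) → ℝ≥0∞} (hG : Measurable G) :
    ∫⁻ ω, G (fun k => ω (n + k)) ∂F.P z = ∫⁻ ω, ∫⁻ ω', G ω' ∂F.P (ω n) ∂F.P z := by
  rw [← lintegral_map hG (measurable_shift n), map_shift, lintegral_map hG measurable_snd,
    Measure.lintegral_compProd (f := fun p => G p.2) (hG.comp measurable_snd),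
    lintegral_map (hG.lintegral_kernel (κ := F.ker)) (measurable_pi_apply n)]
  rfl

lemma integrable_snd_compProd_iff (z : S) (n : ℕ) {G : (ℕ → S) → ℝ} (hG : Measurable G) :
    Integrable (fun p => G p.2) ((F.P z).map (· n) ⊗ₘ F.ker) ↔
      Integrable (fun ω => G fun k => ω (n + k)) (F.P z) := by
  change Integrable (G ∘ Prod.snd) _ ↔ Integrable (G ∘ fun (ω : ℕ → S) k => ω (n + k)) _
  rw [← integrable_map_measure hG.aestronglyMeasurable measurable_snd.aemeasurable,
    ← map_shift, integrable_map_measure hG.aestronglyMeasurable (measurable_shift n).aemeasurable]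

lemma integral_comp_shift (z : S) (n : ℕ) {G : (ℕ → S) → ℝ} (hG : Measurable G)
    (hint : Integrable (fun ω => G fun k => ω (n + k)) (F.P z)) :
    ∫ ω, G (fun k => ω (n + k)) ∂F.P z = ∫ ω, ∫ ω', G ω' ∂F.P (ω n) ∂F.P z := by
  rw [← integral_map (measurable_shift n).aemeasurable hG.aestronglyMeasurable, map_shift,
    integral_map measurable_snd.aemeasurable hG.aestronglyMeasurable,
    Measure.integral_compProd ((F.integrable_snd_compProd_iff z n hG).2 hint),
    integral_map (measurable_pi_apply n).aemeasurable
      (F.stronglyMeasurable_integral hG).aestronglyMeasurable]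
  rfl

lemma integrable_integral_of_integrable_comp_shift (z : S) (n : ℕ) {G : (ℕ → S) → ℝ}
    (hG : Measurable G)
    (hint : Integrable (fun ω => G fun k => ω (n + k)) (F.P z)) :
    Integrable (fun ω => ∫ ω', G ω' ∂F.P (ω n)) (F.P z) :=
  (integrable_map_measure (F.stronglyMeasurable_integral hG).aestronglyMeasurable
    (measurable_pi_apply n).aemeasurable).1
    ((F.integrable_snd_compProd_iff z n hG).2 hint).integral_compProd

lemma ae_comp_zero_eq {β : Type*} [MeasurableSpace β] [MeasurableSingletonClass β]
    {g : S → β} (hg : Measurable g) (z : S) : ∀ᵐ ω ∂F.P z, g (ω 0) = g z := by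
  have hmeas : MeasurableSet {ω : ℕ → S | g (ω 0) = g z} :=
    hg.comp (measurable_pi_apply 0) (measurableSet_singleton _)
  refine ae_iff.2 ((prob_compl_eq_zero_iff hmeas).2 (le_antisymm prob_le_one ?_))
  exact (F.start z).symm.le.trans (measure_mono fun ω (hω : ω 0 = z) => by simp [hω])

section Increments

def MeanAbsIncrementLE (ℓ : S → ℝ) (U : ℝ) : Prop :=
  ∀ z, ∫⁻ ω, ENNReal.ofReal |ℓ (ω 1) - ℓ z| ∂F.P z ≤ ENNReal.ofReal U

variable {ℓ : S → ℝ} {U : ℝ}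

lemma lintegral_abs_sub_comp_succ_le (hℓ : Measurable ℓ)
    (hU : F.MeanAbsIncrementLE ℓ U) (z : S) (n : ℕ) :
    ∫⁻ ω, ENNReal.ofReal |ℓ (ω (n + 1)) - ℓ (ω n)| ∂F.P z ≤ ENNReal.ofReal U := by
  have hG : Measurable fun ω : ℕ → S => ENNReal.ofReal |ℓ (ω 1) - ℓ (ω 0)| := by fun_prop
  calc ∫⁻ ω, ENNReal.ofReal |ℓ (ω (n + 1)) - ℓ (ω n)| ∂F.P z
      = ∫⁻ ω, ∫⁻ ω', ENNReal.ofReal |ℓ (ω' 1) - ℓ (ω' 0)| ∂F.P (ω n) ∂F.P z :=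
        F.lintegral_comp_shift z n hG
    _ ≤ ∫⁻ _, ENNReal.ofReal U ∂F.P z := lintegral_mono fun ω => by
        rw [lintegral_congr_ae ((F.ae_comp_zero_eq hℓ (ω n)).mono fun ω' h => by rw [h])]
        exact hU (ω n)
    _ = ENNReal.ofReal U := by simp

lemma lintegral_abs_sub_start_le (hℓ : Measurable ℓ)
    (hU : F.MeanAbsIncrementLE ℓ U) (z : S) (n : ℕ) :
    ∫⁻ ω, ENNReal.ofReal |ℓ (ω n) - ℓ z| ∂F.P z ≤ n * ENNReal.ofReal U := by
  induction n with
  | zero =>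
    rw [lintegral_congr_ae ((F.ae_comp_zero_eq hℓ z).mono fun ω h => by rw [h])]
    simp
  | succ n ih =>
    calc ∫⁻ ω, ENNReal.ofReal |ℓ (ω (n + 1)) - ℓ z| ∂F.P z
        ≤ ∫⁻ ω, (ENNReal.ofReal |ℓ (ω (n + 1)) - ℓ (ω n)| + ENNReal.ofReal |ℓ (ω n) - ℓ z|)
            ∂F.P z :=
          lintegral_mono fun ω =>
            (ENNReal.ofReal_le_ofReal (abs_sub_le _ _ _)).trans ENNReal.ofReal_add_le
      _ = ∫⁻ ω, ENNReal.ofReal |ℓ (ω (n + 1)) - ℓ (ω n)| ∂F.P z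
            + ∫⁻ ω, ENNReal.ofReal |ℓ (ω n) - ℓ z| ∂F.P z :=
          lintegral_add_left (by fun_prop) _
      _ ≤ ENNReal.ofReal U + n * ENNReal.ofReal U :=
          add_le_add (F.lintegral_abs_sub_comp_succ_le hℓ hU z n) ih
      _ = (n + 1 : ℕ) * ENNReal.ofReal U := by push_cast; ring

lemma integrable_sub_start (hℓ : Measurable ℓ)
    (hU : F.MeanAbsIncrementLE ℓ U) (z : S) (n : ℕ) :
    Integrable (fun ω => ℓ (ω n) - ℓ z) (F.P z) :=
  ⟨(by fun_prop : Measurable fun ω : ℕ → S => ℓ (ω n) - ℓ z).aestronglyMeasurable,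
    (hasFiniteIntegral_iff_norm _).2 ((F.lintegral_abs_sub_start_le hℓ hU z n).trans_lt
    (ENNReal.mul_lt_top (ENNReal.natCast_lt_top n) ENNReal.ofReal_lt_top))⟩

lemma integral_abs_sub_start_le (hℓ : Measurable ℓ) (hU₀ : 0 ≤ U)
    (hU : F.MeanAbsIncrementLE ℓ U) (z : S) (n : ℕ) :
    ∫ ω, |ℓ (ω n) - ℓ z| ∂F.P z ≤ n * U := by
  rw [integral_eq_lintegral_of_nonneg_ae (.of_forall fun _ => abs_nonneg _)
    (F.integrable_sub_start hℓ hU z n).abs.aestronglyMeasurable]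
  calc (∫⁻ ω, ENNReal.ofReal |ℓ (ω n) - ℓ z| ∂F.P z).toReal
      ≤ (n * ENNReal.ofReal U).toReal :=
        ENNReal.toReal_mono (ENNReal.mul_ne_top (ENNReal.natCast_ne_top n) ENNReal.ofReal_ne_top)
          (F.lintegral_abs_sub_start_le hℓ hU z n)
    _ = n * U := by simp [hU₀]

lemma integrable_comp_succ_sub (hℓ : Measurable ℓ)
    (hU : F.MeanAbsIncrementLE ℓ U) (z : S) (n : ℕ) :
    Integrable (fun ω => ℓ (ω (n + 1)) - ℓ (ω n)) (F.P z) :=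
  ((F.integrable_sub_start hℓ hU z (n + 1)).sub (F.integrable_sub_start hℓ hU z n)).congr
    (.of_forall fun ω => by simp)

lemma integral_sub_comp_succ_le (hℓ : Measurable ℓ)
    (hU : F.MeanAbsIncrementLE ℓ U)
    {ψ : S → ℝ} (hdrift : ∀ z, ∫ ω, (ℓ (ω 1) - ℓ z) ∂F.P z ≤ ψ z) (z : S) (n : ℕ)
    (hψ : Integrable (fun ω => ψ (ω n)) (F.P z)) :
    ∫ ω, (ℓ (ω (n + 1)) - ℓ (ω n)) ∂F.P z ≤ ∫ ω, ψ (ω n) ∂F.P z := by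
  have hG : Measurable fun ω : ℕ → S => ℓ (ω 1) - ℓ (ω 0) := by fun_prop
  have hint := F.integrable_comp_succ_sub hℓ hU z n
  refine (F.integral_comp_shift z n hG hint).trans_le
    (integral_mono (F.integrable_integral_of_integrable_comp_shift z n hG hint) hψ
      fun ω => ?_)
  rw [integral_congr_ae ((F.ae_comp_zero_eq hℓ (ω n)).mono fun ω' h => by rw [h])]
  exact hdrift (ω n)

lemma integral_sub_start_le_sum (hℓ : Measurable ℓ)
    (hU : F.MeanAbsIncrementLE ℓ U)
    {ψ : S → ℝ} (hdrift : ∀ z, ∫ ω, (ℓ (ω 1) - ℓ z) ∂F.P z ≤ ψ z) (z : S)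
    (hψ : ∀ n, Integrable (fun ω => ψ (ω n)) (F.P z)) (t : ℕ) :
    ∫ ω, (ℓ (ω t) - ℓ z) ∂F.P z ≤ ∑ n ∈ Finset.range t, ∫ ω, ψ (ω n) ∂F.P z := by
  induction t with
  | zero =>
    rw [integral_congr_ae ((F.ae_comp_zero_eq hℓ z).mono fun ω h => by rw [h])]
    simp
  | succ t ih =>
    have hsplit : ∫ ω, (ℓ (ω (t + 1)) - ℓ z) ∂F.P z
        = ∫ ω, (ℓ (ω (t + 1)) - ℓ (ω t)) ∂F.P z + ∫ ω, (ℓ (ω t) - ℓ z) ∂F.P z := by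
      rw [← integral_add (F.integrable_comp_succ_sub hℓ hU z t) (F.integrable_sub_start hℓ hU z t)]
      simp
    rw [hsplit, Finset.sum_range_succ, add_comm]
    exact add_le_add ih (F.integral_sub_comp_succ_le hℓ hU hdrift z t (hψ t))

lemma integral_comp_antitone_le (hℓ : Measurable ℓ) (hℓ0 : ∀ z, 0 ≤ ℓ z) (hU₀ : 0 ≤ U)
    (hU : F.MeanAbsIncrementLE ℓ U)
    {h : ℝ → ℝ} (hh : Antitone h) (hh0 : ∀ r, 0 ≤ h r) {N : ℝ} (hN : 0 < N) {z : S}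
    (hz : N ≤ ℓ z) (n : ℕ) :
    ∫ ω, h (ℓ (ω n)) ∂F.P z ≤ h (N / 2) + 2 * h 0 / N * (n * U) := by
  have hint : Integrable (fun ω => h (ℓ (ω n))) (F.P z) :=
    .of_bound (hh.measurable.comp (hℓ.comp (measurable_pi_apply n))).aestronglyMeasurable (h 0)
      (.of_forall fun ω => by
        rw [Real.norm_eq_abs, abs_of_nonneg (hh0 _)]; exact hh (hℓ0 _))
  have habs := (F.integrable_sub_start hℓ hU z n).abs.const_mul (2 * h 0 / N)
  calc ∫ ω, h (ℓ (ω n)) ∂F.P z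
      ≤ ∫ ω, (h (N / 2) + 2 * h 0 / N * |ℓ (ω n) - ℓ z|) ∂F.P z :=
        integral_mono hint ((integrable_const _).add habs) fun ω =>
          hh.le_add_mul_abs_sub hh0 (hℓ0 _) hN hz
    _ = h (N / 2) + 2 * h 0 / N * ∫ ω, |ℓ (ω n) - ℓ z| ∂F.P z := by
        rw [integral_add (integrable_const _) habs, integral_const_mul]
        simp
    _ ≤ h (N / 2) + 2 * h 0 / N * (n * U) := by
        have := hh0 0
        gcongr
        exact F.integral_abs_sub_start_le hℓ hU₀ hU z n

lemma eventually_integral_comp_antitone_le (hℓ : Measurable ℓ) (hℓ0 : ∀ z, 0 ≤ ℓ z)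
    (hU₀ : 0 ≤ U) (hU : F.MeanAbsIncrementLE ℓ U) {h : ℝ → ℝ} (hh : Antitone h)
    (hh0 : ∀ r, 0 ≤ h r) (hh_lim : Tendsto h atTop (nhds 0)) {η : ℝ} (hη : 0 < η) (t : ℕ) :
    ∀ᶠ N : ℝ in atTop, ∀ z, N ≤ ℓ z → ∀ n ≤ t, ∫ ω, h (ℓ (ω n)) ∂F.P z ≤ η := by
  obtain ⟨R, hR⟩ := eventually_atTop.1 (hh_lim.eventually (eventually_le_nhds (half_pos hη)))
  filter_upwards [eventually_ge_atTop (2 * R), eventually_gt_atTop 0,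
    eventually_ge_atTop (4 * h 0 * (t * U) / η)] with N hNR hN hNt z hz n hn
  have h1 : h (N / 2) ≤ η / 2 := hR _ (by linarith)
  have h2 : 2 * h 0 / N * (n * U) ≤ η / 2 := by
    rw [div_mul_eq_mul_div, div_le_iff₀ hN]
    rw [div_le_iff₀ hη] at hNt
    have : (n : ℝ) * U ≤ t * U := mul_le_mul_of_nonneg_right (by exact_mod_cast hn) hU₀
    nlinarith [hh0 0]
  linarith [F.integral_comp_antitone_le hℓ hℓ0 hU₀ hU hh hh0 hN hz n]

end Increments

end MarkovFamily

section DriftOfTwoComponentChain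

variable {X Y : Type*} [MeasurableSpace X] [MeasurableSpace Y]
  {chain : MarkovFamily (X × Y)} {XC : MarkovFamily X} {V : Set X} {π : Measure X}

lemma integral_comp_fst_eq
    (hA0 : ∀ x y, Measure.map (fun (ω : ℕ → X × Y) (n : ℕ) => (ω n).1) (chain.P (x, y)) = XC.P x)
    {g : X → ℝ} (hg : Measurable g) (x : X) (y : Y) (n : ℕ) :
    ∫ ω, g (ω n).1 ∂chain.P (x, y) = ∫ ω, g (ω n) ∂XC.P x := by
  have : Measurable fun (ω : ℕ → X × Y) (m : ℕ) => (ω m).1 := by fun_prop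
  rw [← hA0 x y]
  exact (integral_map this.aemeasurable (hg.comp (measurable_pi_apply n)).aestronglyMeasurable).symm

lemma exists_integral_comp_fst_le [IsProbabilityMeasure π]
    (hA0 : ∀ x y, Measure.map (fun (ω : ℕ → X × Y) (n : ℕ) => (ω n).1) (chain.P (x, y)) = XC.P x)
    (hconvV : ∀ ε : ℝ, 0 < ε → ∃ T : ℕ, ∀ t ≥ T, ∀ x ∈ V, ∀ B : Set X, MeasurableSet B →
      |(XC.P x {ω | ω t ∈ B}).toReal - (π B).toReal| ≤ ε)
    {g : X → ℝ} (hg : Measurable g) {K : ℝ} (hgK : ∀ x, |g x| ≤ K) {η : ℝ} (hη : 0 < η) :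
    ∃ T : ℕ, ∀ n ≥ T, ∀ x ∈ V, ∀ y : Y, ∫ ω, g (ω n).1 ∂chain.P (x, y) ≤ ∫ x, g x ∂π + η := by
  obtain ⟨T, hT⟩ := hconvV (η / (2 * (|K| + 1))) (by positivity)
  refine ⟨T, fun n hn x hx y => ?_⟩
  have hTV : ∀ B, MeasurableSet B →
      |((XC.P x).map (· n)).real B - π.real B| ≤ η / (2 * (|K| + 1)) := fun B hB => by
    rw [measureReal_def, Measure.map_apply (measurable_pi_apply n) hB]
    exact hT n hn x hx B hB
  have hdiff := abs_integral_sub_integral_le hg (fun x => (hgK x).trans (le_abs_self K))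
    (abs_nonneg K) hTV
  rw [integral_map (measurable_pi_apply n).aemeasurable hg.aestronglyMeasurable] at hdiff
  have hbound : 2 * |K| * (η / (2 * (|K| + 1))) ≤ η := by
    rw [mul_div_assoc', div_le_iff₀ (by positivity)]
    nlinarith [abs_nonneg K]
  rw [integral_comp_fst_eq hA0 hg]
  linarith [le_abs_self (∫ ω, g (ω n) ∂XC.P x - ∫ x, g x ∂π)]

theorem eventually_integral_drift_le_neg_mul [IsProbabilityMeasure π]
    (hA0 : ∀ x y, Measure.map (fun (ω : ℕ → X × Y) (n : ℕ) => (ω n).1) (chain.P (x, y)) = XC.P x)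
    (hconvV : ∀ ε : ℝ, 0 < ε → ∃ T : ℕ, ∀ t ≥ T, ∀ x ∈ V, ∀ B : Set X, MeasurableSet B →
      |(XC.P x {ω | ω t ∈ B}).toReal - (π B).toReal| ≤ ε)
    {L : Y → ℝ} {U : ℝ} {h : ℝ → ℝ} {f : X → ℝ} {ε δ : ℝ}
    (hB1 : CondB1 chain L U) (hB2 : CondB2 chain π L h f ε) (hδ : δ < ε) :
    ∀ᶠ t : ℕ in atTop, ∀ᶠ N : ℝ in atTop, ∀ x ∈ V, ∀ y, N ≤ L y →
      ∫ ω, (L (ω t).2 - L y) ∂chain.P (x, y) ≤ -t * δ := by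
  obtain ⟨hL, hL0, hU⟩ := hB1
  obtain ⟨hh, hh0, hh_lim, hf, ⟨K, hK⟩, -, hf_int, hdrift⟩ := hB2
  -- `ε - δ = 3η`: one `η` each for the total-variation error and for the `h`-term, and one to
  -- absorb the first `T` steps.
  set η := (ε - δ) / 3 with hη
  have hη0 : 0 < η := by rw [hη]; linarith
  have hU' : chain.MeanAbsIncrementLE (fun z => L z.2) (max U 0) := fun z =>
    (hU z.1 z.2).trans (ENNReal.ofReal_le_ofReal (le_max_left _ _))
  have hℓ : Measurable fun z : X × Y => L z.2 := hL.comp measurable_snd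
  obtain ⟨T, hT⟩ := exists_integral_comp_fst_le hA0 hconvV hf hK hη0
  filter_upwards [eventually_ge_atTop T,
    tendsto_natCast_atTop_atTop.eventually_ge_atTop (T * (|K| + ε) / η)] with t hTt ht
  filter_upwards [chain.eventually_integral_comp_antitone_le hℓ (fun z => hL0 z.2)
    (le_max_right U 0) hU' hh hh0 hh_lim hη0 t] with N hH x hx y hy
  have hfn (n : ℕ) : Integrable (fun ω => f (ω n).1) (chain.P (x, y)) :=
    .of_bound (hf.comp (measurable_fst.comp (measurable_pi_apply n))).aestronglyMeasurable K
      (.of_forall fun ω => hK _)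
  have hhn (n : ℕ) : Integrable (fun ω => h (L (ω n).2)) (chain.P (x, y)) :=
    .of_bound (hh.measurable.comp (hℓ.comp (measurable_pi_apply n))).aestronglyMeasurable (h 0)
      (.of_forall fun ω => by rw [Real.norm_eq_abs, abs_of_nonneg (hh0 _)]; exact hh (hL0 _))
  have hF (n : ℕ) : ∫ ω, f (ω n).1 ∂chain.P (x, y) ≤ |K| :=
    (integral_mono (hfn n) (integrable_const _) fun ω => (le_abs_self _).trans
      ((hK _).trans (le_abs_self K))).trans (by simp)
  calc ∫ ω, (L (ω t).2 - L y) ∂chain.P (x, y)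
      ≤ ∑ n ∈ Finset.range t, ∫ ω, (f (ω n).1 + h (L (ω n).2)) ∂chain.P (x, y) :=
        chain.integral_sub_start_le_sum hℓ hU' (fun z => hdrift z.1 z.2) (x, y)
          (fun n => (hfn n).add (hhn n)) t
    _ ≤ T * (|K| + η) + (t - T) * (-ε + 2 * η) := by
        refine sum_range_le_of_piecewise_bound hTt (fun n hn => ?_) (fun n hn hnt => ?_) <;>
          rw [integral_add (hfn n) (hhn n)]
        · linarith [hF n, hH (x, y) hy n (hn.le.trans hTt)]
        · linarith [hT n hn x hx y, hH (x, y) hy n hnt.le]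
    _ ≤ -t * δ := by
        rw [div_le_iff₀ hη0] at ht
        have : (0 : ℝ) ≤ T * η := by positivity
        nlinarith [abs_nonneg K]

end DriftOfTwoComponentChain

theorem lemma2_multivariate_drift_general
    {X : Type*} [MeasurableSpace X]
    {M : ℕ} {Yi : Fin M → Type*} [∀ i, MeasurableSpace (Yi i)]
    (chain : MarkovFamily (X × (∀ i, Yi i))) (XC : MarkovFamily X) (V : Set X) (π : Measure X)
    (L2 : ∀ i, Yi i → ℝ) (U : ℝ) (h : Fin M → ℝ → ℝ) (f : Fin M → X → ℝ) (εs : Fin M → ℝ)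
    (hA : CondA chain XC V π)
    (hB1 : CondB1multi chain L2 U)
    (hB2 : CondB2multi chain π L2 h f εs) :
    ∃ t' : ℕ, ∀ t : ℕ, t' ≤ t → ∃ N0 : ℝ, 0 < N0 ∧
      ∀ (i : Fin M), ∀ x ∈ V, ∀ y : ∀ i, Yi i, N0 ≤ L2 i (y i) →
        ∫ ω, (L2 i ((ω t).2 i) - L2 i (y i)) ∂ chain.P (x, y)
          ≤ -(t : ℝ) * ((⨅ i, εs i) / 10) := by
  obtain ⟨-, hA0, -, -, hπ, -, -, hconvV, -⟩ := hA
  obtain ⟨hL2, hL20, hU⟩ := hB1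
  have hcoord (i : Fin M) : ∀ᶠ t : ℕ in atTop, ∀ᶠ N : ℝ in atTop, ∀ x ∈ V, ∀ y : ∀ j, Yi j,
      N ≤ L2 i (y i) →
        ∫ ω, (L2 i ((ω t).2 i) - L2 i (y i)) ∂chain.P (x, y) ≤ -t * (εs i / 10) :=
    eventually_integral_drift_le_neg_mul hA0 hconvV
      ⟨(hL2 i).comp (measurable_pi_apply i), fun y => hL20 i (y i), hU i⟩ (hB2 i)
      (by linarith [(hB2 i).2.2.2.2.2.1])
  obtain ⟨t', ht'⟩ := eventually_atTop.1 (eventually_all.2 hcoord)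
  refine ⟨t', fun t ht => ?_⟩
  obtain ⟨N0, hN0, hN0pos⟩ := ((eventually_all.2 (ht' t ht)).and (eventually_gt_atTop 0)).exists
  refine ⟨N0, hN0pos, fun i x hx y hy => (hN0 i x hx y hy).trans ?_⟩
  have : (⨅ j, εs j) ≤ εs i := ciInf_le (Finite.bddBelow_range εs) i
  have : (0 : ℝ) ≤ t := t.cast_nonneg
  nlinarith

/-- **Lemma 2** (Foss–Shneer–Tyurlikov, multivariate drift lemma). Under Conditions A and
B̃1–B̃2, there is an integer `t'` such that for every `t ≥ t'` there is `N0 > 0` with: for each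
coordinate `i`, every `x ∈ V` and every `y` with `L2_i (y_i) ≥ N0`,
`E_{x,y}[L2_i(Y_i^t) - L2_i(y_i)] ≤ - t Δ`, where `Δ = (min_i ε_i) / 10`. -/
theorem lemma2_multivariate_drift
    {X : Type*} [MeasurableSpace X] [MeasurableSpace.CountablyGenerated X]
    {M : ℕ} (hM : 0 < M) {Yi : Fin M → Type*} [∀ i, MeasurableSpace (Yi i)]
    (chain : MarkovFamily (X × (∀ i, Yi i))) (XC : MarkovFamily X) (V : Set X) (π : Measure X)
    (L2 : ∀ i, Yi i → ℝ) (U : ℝ) (h : Fin M → ℝ → ℝ) (f : Fin M → X → ℝ) (εs : Fin M → ℝ)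
    (hA : CondA chain XC V π)
    (hB1 : CondB1multi chain L2 U)
    (hB2 : CondB2multi chain π L2 h f εs) :
    ∃ t' : ℕ, ∀ t : ℕ, t' ≤ t → ∃ N0 : ℝ, 0 < N0 ∧
      ∀ (i : Fin M), ∀ x ∈ V, ∀ y : ∀ i, Yi i, N0 ≤ L2 i (y i) →
        ∫ ω, (L2 i ((ω t).2 i) - L2 i (y i)) ∂ chain.P (x, y)
          ≤ -(t : ℝ) * ((⨅ i, εs i) / 10) :=
  lemma2_multivariate_drift_general chain XC V π L2 U h f εs hA hB1 hB2
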